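/- arXiv:1605.08949 — 2 statements merged into one kernel-verified Lean document; each statement's English description precedes it below -/
import Mathlib

section
/- Let X be a set and C an abstract simplicial complex on X (a downward-closed family of finite subsets of X covering X, viewed as a poset under inclusion). A presheaf P : C^op → Sets is a sheaf (i.e., for every cover ⋃ᵢ Uᵢ = U with U, Uᵢ ∈ C, the map s ↦ (s|_{Uᵢ})ᵢ is a bijection from P(U) onto the set of matching families) if and only if for every U ∈ C the canonical map P(U) → ∏_{x ∈ U} P({x}) induced by the restrictions is a bijection. -/
open scoped Classical

/-- An abstract simplicial complex on a vertex set `X`: a downward-closed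
family of finite subsets of `X` containing every singleton. -/
structure SC (X : Type) where
  faces : Set (Finset X)
  down_closed : ∀ {s t : Finset X}, s ∈ faces → t ⊆ s → t ∈ faces
  singleton_mem : ∀ x : X, {x} ∈ faces

/-- A `Set`-valued presheaf on the poset of faces of a simplicial complex. -/
structure Psh {X : Type} (C : SC X) where
  obj : ∀ U : Finset X, U ∈ C.faces → Type
  res : ∀ {U V : Finset X} (hU : U ∈ C.faces) (hV : V ∈ C.faces),
      V ⊆ U → obj U hU → obj V hV
  res_id : ∀ {U : Finset X} (hU : U ∈ C.faces) (s : obj U hU),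
      res hU hU (subset_refl U) s = s
  res_comp : ∀ {U V W : Finset X} (hU : U ∈ C.faces) (hV : V ∈ C.faces)
      (hW : W ∈ C.faces) (hVU : V ⊆ U) (hWV : W ⊆ V) (s : obj U hU),
      res hV hW hWV (res hU hV hVU s) = res hU hW (hWV.trans hVU) s

/-- The canonical map `P(U) → ∏_{x ∈ U} P({x})` induced by the restrictions. -/
def pointMap {X : Type} (C : SC X) (P : Psh C) (U : Finset X) (hU : U ∈ C.faces) :
    P.obj U hU → ∀ x : {x // x ∈ U}, P.obj {x.1} (C.singleton_mem x.1) :=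
  fun s x => P.res hU (C.singleton_mem x.1) (Finset.singleton_subset_iff.mpr x.2) s

/-- `(tᵢ)ᵢ` is a matching family for the family of faces `(Uᵢ)ᵢ`. -/
def IsMatching {X : Type} (C : SC X) (P : Psh C) {ι : Type} (Ui : ι → Finset X)
    (hUi : ∀ i, Ui i ∈ C.faces) (t : ∀ i, P.obj (Ui i) (hUi i)) : Prop :=
  ∀ j k,
    P.res (hUi j) (C.down_closed (hUi j) Finset.inter_subset_left)
      Finset.inter_subset_left (t j)
    = P.res (hUi k) (C.down_closed (hUi k) Finset.inter_subset_right)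
      Finset.inter_subset_right (t k)

/-- A presheaf on a simplicial complex is a sheaf (every matching
family for every cover has a unique amalgamation) iff for every face `U` the
canonical map `P(U) → ∏_{x∈U} P({x})` is a bijection. -/
theorem stmt0 {X : Type} (C : SC X) (P : Psh C) :
    (∀ (ι : Type) (Ui : ι → Finset X) (hUi : ∀ i, Ui i ∈ C.faces)
        (U : Finset X) (hU : U ∈ C.faces)
        (hcov : ∀ x, x ∈ U ↔ ∃ i, x ∈ Ui i)
        (t : ∀ i, P.obj (Ui i) (hUi i)), IsMatching C P Ui hUi t →
        ∃! s : P.obj U hU,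
          ∀ i, P.res hU (hUi i) (fun x hx => (hcov x).mpr ⟨i, hx⟩) s = t i)
    ↔ (∀ (U : Finset X) (hU : U ∈ C.faces),
        Function.Bijective (pointMap C P U hU)) := by
  constructor
  · intro hsheaf U hU
    have hsub : ∀ (V : Finset X) (hV : V ∈ C.faces), V = ∅ →
        ∀ a b : P.obj V hV, a = b := by
      intro V hV hVe a b
      subst hVe
      obtain ⟨s, -, huniq⟩ := hsheaf Empty (fun i => i.elim) (fun i => i.elim) ∅ hV
        (by simp) (fun i => i.elim) (fun j => j.elim)
      rw [huniq a (fun i => i.elim), huniq b (fun i => i.elim)]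
    have hmatch : ∀ t : ∀ x : {x // x ∈ U}, P.obj {x.1} (C.singleton_mem x.1),
        IsMatching C P (fun x : {x // x ∈ U} => {x.1}) (fun x => C.singleton_mem x.1) t := by
      intro t j k
      by_cases hjk : j = k
      · subst hjk; rfl
      · apply hsub
        have hne : j.1 ≠ k.1 := fun h => hjk (Subtype.ext h)
        exact Finset.singleton_inter_of_notMem (by simp [hne])
    have hcov : ∀ x, x ∈ U ↔ ∃ i : {x // x ∈ U}, x ∈ ({i.1} : Finset X) := by
      intro x
      constructor
      · intro hx; exact ⟨⟨x, hx⟩, Finset.mem_singleton_self x⟩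
      · rintro ⟨i, hi⟩
        rw [Finset.mem_singleton] at hi
        subst hi; exact i.2
    constructor
    · intro s s' h
      obtain ⟨w, -, huniq⟩ := hsheaf {x // x ∈ U} (fun x => {x.1})
        (fun x => C.singleton_mem x.1) U hU hcov (pointMap C P U hU s)
        (hmatch _)
      have hs : s = w := huniq s (fun i => rfl)
      have hs' : s' = w := huniq s' (fun i => (congrFun h i).symm)
      exact hs.trans hs'.symm
    · intro p
      obtain ⟨w, hw, -⟩ := hsheaf {x // x ∈ U} (fun x => {x.1})
        (fun x => C.singleton_mem x.1) U hU hcov p (hmatch p)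
      exact ⟨w, funext fun i => hw i⟩
  · intro hbij ι Ui hUi U hU hcov t hmatch
    have key : ∀ (i j : ι) (x : X) (hxi : x ∈ Ui i) (hxj : x ∈ Ui j),
        P.res (hUi i) (C.singleton_mem x) (Finset.singleton_subset_iff.mpr hxi) (t i)
      = P.res (hUi j) (C.singleton_mem x) (Finset.singleton_subset_iff.mpr hxj) (t j) := by
      intro i j x hxi hxj
      have hsx : ({x} : Finset X) ⊆ Ui i ∩ Ui j :=
        Finset.singleton_subset_iff.mpr (Finset.mem_inter.mpr ⟨hxi, hxj⟩)
      have h1 := P.res_comp (hUi i) (C.down_closed (hUi i) Finset.inter_subset_left)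
        (C.singleton_mem x) Finset.inter_subset_left hsx (t i)
      have h2 := P.res_comp (hUi j) (C.down_closed (hUi j) Finset.inter_subset_right)
        (C.singleton_mem x) Finset.inter_subset_right hsx (t j)
      rw [← h1, ← h2, hmatch i j]
    choose ix hix using fun x : {x // x ∈ U} => (hcov x.1).mp x.2
    set q : ∀ x : {x // x ∈ U}, P.obj {x.1} (C.singleton_mem x.1) :=
      fun x => P.res (hUi (ix x)) (C.singleton_mem x.1)
        (Finset.singleton_subset_iff.mpr (hix x)) (t (ix x)) with hq
    obtain ⟨s, hs⟩ := (hbij U hU).2 q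
    have lemA : ∀ s₀ : P.obj U hU, pointMap C P U hU s₀ = q →
        ∀ i, P.res hU (hUi i) (fun x hx => (hcov x).mpr ⟨i, hx⟩) s₀ = t i := by
      intro s₀ h0 i
      apply (hbij (Ui i) (hUi i)).1
      funext x
      show P.res (hUi i) (C.singleton_mem x.1) _
          (P.res hU (hUi i) _ s₀) = _
      rw [P.res_comp]
      have hxu : x.1 ∈ U := (hcov x.1).mpr ⟨i, x.2⟩
      have := congrFun h0 ⟨x.1, hxu⟩
      rw [show P.res hU (C.singleton_mem x.1)
          ((Finset.singleton_subset_iff.mpr x.2).trans fun y hy => (hcov y).mpr ⟨i, hy⟩) s₀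
        = pointMap C P U hU s₀ ⟨x.1, hxu⟩ from rfl, this, hq]
      exact (key (ix ⟨x.1, hxu⟩) i x.1 (hix ⟨x.1, hxu⟩) x.2)
    have lemB : ∀ s₀ : P.obj U hU,
        (∀ i, P.res hU (hUi i) (fun x hx => (hcov x).mpr ⟨i, hx⟩) s₀ = t i) →
        pointMap C P U hU s₀ = q := by
      intro s₀ h0
      funext x
      have hxi : x.1 ∈ Ui (ix x) := hix x
      have h1 := P.res_comp hU (hUi (ix x)) (C.singleton_mem x.1)
        (fun y hy => (hcov y).mpr ⟨ix x, hy⟩)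
        (Finset.singleton_subset_iff.mpr hxi) s₀
      show P.res hU (C.singleton_mem x.1) _ s₀ = _
      rw [← h1, h0 (ix x), hq]
    exact ⟨s, lemA s hs, fun s' h' => (hbij U hU).1 ((lemB s' h').trans hs.symm)⟩
end

section
/- Let C be an abstract simplicial complex on X. The category of separated Set-valued presheaves on C is equivalent to the category of non-degenerate simplicial maps into C (non-degenerate bundles over C), where morphisms are simplicial maps over C. The equivalence sends a non-degenerate bundle π : A → C to the presheaf U ↦ {s ∈ A : π[s] = U} with restriction maps s ↦ s ∩ π⁻¹[V]. -/
open scoped Classical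
open CategoryTheory

/-- A separated `Set`-valued presheaf on the simplicial complex `C`. -/
structure SepPsh {X : Type} (C : SC X) where
  obj : ∀ U : Finset X, U ∈ C.faces → Type
  res : ∀ {U V : Finset X} (hU : U ∈ C.faces) (hV : V ∈ C.faces),
      V ⊆ U → obj U hU → obj V hV
  res_id : ∀ {U : Finset X} (hU : U ∈ C.faces) (s : obj U hU),
      res hU hU (subset_refl U) s = s
  res_comp : ∀ {U V W : Finset X} (hU : U ∈ C.faces) (hV : V ∈ C.faces)
      (hW : W ∈ C.faces) (hVU : V ⊆ U) (hWV : W ⊆ V) (s : obj U hU),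
      res hV hW hWV (res hU hV hVU s) = res hU hW (hWV.trans hVU) s
  separated : ∀ (U : Finset X) (hU : U ∈ C.faces),
      Function.Injective (fun (s : obj U hU) (x : {x // x ∈ U}) =>
        res hU (C.singleton_mem x.1) (Finset.singleton_subset_iff.mpr x.2) s)

/-- The category of separated presheaves on `C`, with natural
transformations as morphisms. -/
instance {X : Type} (C : SC X) : Category (SepPsh C) where
  Hom P Q := {f : ∀ (U : Finset X) (hU : U ∈ C.faces), P.obj U hU → Q.obj U hU //
    ∀ (U V : Finset X) (hU : U ∈ C.faces) (hV : V ∈ C.faces) (h : V ⊆ U)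
      (s : P.obj U hU), f V hV (P.res hU hV h s) = Q.res hU hV h (f U hU s)}
  id P := ⟨fun _ _ s => s, fun _ _ _ _ _ _ => rfl⟩
  comp f g := ⟨fun U hU s => g.1 U hU (f.1 U hU s), by
    intro U V hU hV h s; dsimp only; rw [f.2, g.2]⟩
  id_comp f := rfl
  comp_id f := rfl
  assoc f g h := rfl

/-- A non-degenerate bundle over `C`: a simplicial complex on a vertex set
`E` together with a simplicial map `π` to `C` that is injective on each
simplex. -/
structure Bnd {X : Type} (C : SC X) where
  E : Type
  faces : Set (Finset E)
  down_closed : ∀ {s t : Finset E}, s ∈ faces → t ⊆ s → t ∈ faces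
  vertex_mem : ∀ e : E, {e} ∈ faces
  π : E → X
  simplicial : ∀ s ∈ faces, s.image π ∈ C.faces
  nondeg : ∀ s ∈ faces, Set.InjOn π ↑s

/-- The category of non-degenerate bundles over `C`, with simplicial maps
over `C` as morphisms. -/
instance {X : Type} (C : SC X) : Category (Bnd C) where
  Hom B1 B2 := {f : B1.E → B2.E //
    (∀ s ∈ B1.faces, s.image f ∈ B2.faces) ∧ ∀ e, B2.π (f e) = B1.π e}
  id B := ⟨id, ⟨fun s hs => by simpa using hs, fun _ => rfl⟩⟩
  comp f g := ⟨g.1 ∘ f.1, ⟨fun s hs => by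
      rw [← Finset.image_image]; exact g.2.1 _ (f.2.1 s hs),
    fun e => by simp [g.2.2, f.2.2]⟩⟩
  id_comp f := rfl
  comp_id f := rfl
  assoc f g h := rfl

/-- The separated presheaf of local sections of a non-degenerate bundle:
`P(U) = {s ∈ A : π[s] = U}`, with restrictions `s ↦ s ∩ π⁻¹[V]`. -/
noncomputable def bundlePsh {X : Type} {C : SC X} (B : Bnd C) : SepPsh C where
  obj U _ := {s : Finset B.E // s ∈ B.faces ∧ s.image B.π = U}
  res {U V} hU hV h s := ⟨s.1.filter (fun e => B.π e ∈ V),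
    B.down_closed s.2.1 (Finset.filter_subset _ _), by
      ext y; constructor
      · intro hy
        simp only [Finset.mem_image, Finset.mem_filter] at hy
        obtain ⟨e, ⟨_, hev⟩, rfl⟩ := hy; exact hev
      · intro hy
        have hyU : y ∈ U := h hy
        rw [← s.2.2] at hyU
        obtain ⟨e, he, rfl⟩ := Finset.mem_image.mp hyU
        exact Finset.mem_image.mpr ⟨e, Finset.mem_filter.mpr ⟨he, hy⟩, rfl⟩⟩
  res_id hU s := Subtype.ext (Finset.filter_true_of_mem
    (fun e he => s.2.2 ▸ Finset.mem_image_of_mem _ he))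
  res_comp {U V W} hU hV hW hVU hWV s := by
    apply Subtype.ext
    simp only [Finset.filter_filter]
    exact Finset.filter_congr fun e he =>
      ⟨fun h' => h'.2, fun h' => ⟨hWV h', h'⟩⟩
  separated U hU := by
    intro s t hst
    apply Subtype.ext
    ext e
    have key : ∀ (u v : {s : Finset B.E // s ∈ B.faces ∧ s.image B.π = U}),
        e ∈ u.1 → (∀ x : {x // x ∈ U},
          (u.1.filter (fun a => B.π a ∈ ({x.1} : Finset X))) =
          (v.1.filter (fun a => B.π a ∈ ({x.1} : Finset X)))) → e ∈ v.1 := by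
      intro u v he hx
      have hπ : B.π e ∈ U := u.2.2 ▸ Finset.mem_image_of_mem _ he
      have h1 : e ∈ u.1.filter (fun a => B.π a ∈ ({B.π e} : Finset X)) :=
        Finset.mem_filter.mpr ⟨he, by simp⟩
      rw [hx ⟨B.π e, hπ⟩] at h1
      exact (Finset.mem_filter.mp h1).1
    constructor
    · intro he
      exact key s t he (fun x => congrArg Subtype.val (congrFun hst x))
    · intro he
      exact key t s he (fun x => (congrArg Subtype.val (congrFun hst x)).symm)

/-- The functor from non-degenerate bundles over `C` to separated presheaves
on `C`, sending a bundle to its presheaf of local sections. -/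
noncomputable def bundleToPresheaf {X : Type} (C : SC X) : Bnd C ⥤ SepPsh C where
  obj B := bundlePsh B
  map {B1 B2} f := ⟨fun U hU s => ⟨s.1.image f.1, f.2.1 s.1 s.2.1, by
      rw [Finset.image_image, show B2.π ∘ f.1 = B1.π from funext f.2.2]
      exact s.2.2⟩, by
    intro U V hU hV h s
    apply Subtype.ext
    show (s.1.filter (fun e => B1.π e ∈ V)).image f.1
        = (s.1.image f.1).filter (fun e => B2.π e ∈ V)
    ext e2
    simp only [Finset.mem_image, Finset.mem_filter]
    constructor
    · rintro ⟨e, ⟨he, hv⟩, rfl⟩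
      exact ⟨⟨e, he, rfl⟩, by rw [f.2.2]; exact hv⟩
    · rintro ⟨⟨e, he, rfl⟩, hv⟩
      exact ⟨e, ⟨he, by rw [← f.2.2]; exact hv⟩, rfl⟩⟩
  map_id B := by
    apply Subtype.ext
    funext U hU s
    apply Subtype.ext
    show s.1.image id = s.1
    exact Finset.image_id
  map_comp {B1 B2 B3} f g := by
    apply Subtype.ext
    funext U hU s
    apply Subtype.ext
    show s.1.image (g.1 ∘ f.1) = (s.1.image f.1).image g.1
    exact (Finset.image_image).symm

/-!
Nondegeneracy makes a section of a bundle over a vertex `{x}` a single point of the fibre, so a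
morphism of section presheaves is a vertex map over `C`; naturality and a counting argument show
that it acts on every section by taking images, which gives fullness and faithfulness.
Conversely, a separated presheaf `P` is the section presheaf of its étale space: the vertices are
the germs `(x, p)` with `p ∈ P {x}`, the simplices are the subsets of graphs of sections, and
separatedness says precisely that a section is determined by its graph.
-/

namespace SepPsh

variable {X : Type} {C : SC X} (P : SepPsh C)

lemma isIso_of_bijective {Q : SepPsh C} (f : P ⟶ Q)
    (hf : ∀ U hU, Function.Bijective (f.1 U hU)) : IsIso f := by
  let e U hU := Equiv.ofBijective _ (hf U hU)
  refine ⟨⟨⟨fun U hU => (e U hU).symm, fun U V hU hV h t => ?_⟩, ?_, ?_⟩⟩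
  · apply (e V hV).injective
    change f.1 V hV _ = f.1 V hV _
    rw [f.2]
    simp only [e, Equiv.ofBijective_apply_symm_apply]
  · exact Subtype.ext (funext₂ fun U hU => funext (e U hU).symm_apply_apply)
  · exact Subtype.ext (funext₂ fun U hU => funext (e U hU).apply_symm_apply)

def germ {U : Finset X} (hU : U ∈ C.faces) (a : P.obj U hU) (x : X) (hx : x ∈ U) :
    P.obj {x} (C.singleton_mem x) :=
  P.res hU (C.singleton_mem x) (Finset.singleton_subset_iff.mpr hx) a

lemma germ_res {U V : Finset X} (hU : U ∈ C.faces) (hV : V ∈ C.faces) (hVU : V ⊆ U)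
    (a : P.obj U hU) (x : X) (hx : x ∈ V) :
    P.germ hV (P.res hU hV hVU a) x hx = P.germ hU a x (hVU hx) :=
  P.res_comp ..

lemma germ_self (x : X) (a : P.obj {x} (C.singleton_mem x)) :
    P.germ (C.singleton_mem x) a x (Finset.mem_singleton_self x) = a :=
  P.res_id ..

lemma ext_germ {U : Finset X} (hU : U ∈ C.faces) {a b : P.obj U hU}
    (h : ∀ x hx, P.germ hU a x hx = P.germ hU b x hx) : a = b :=
  P.separated U hU (funext fun x => h x.1 x.2)

abbrev Etale : Type := Σ x : X, P.obj {x} (C.singleton_mem x)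

noncomputable def graph {U : Finset X} (hU : U ∈ C.faces) (a : P.obj U hU) : Finset P.Etale :=
  U.attach.image fun x => ⟨x.1, P.germ hU a x.1 x.2⟩

variable {P}

lemma mem_graph {U : Finset X} {hU : U ∈ C.faces} {a : P.obj U hU} {x : X}
    {p : P.obj {x} (C.singleton_mem x)} :
    (⟨x, p⟩ : P.Etale) ∈ P.graph hU a ↔ ∃ hx : x ∈ U, p = P.germ hU a x hx := by
  simp only [graph, Finset.mem_image, Finset.mem_attach, true_and, Subtype.exists]
  constructor
  · rintro ⟨y, hy, h⟩
    cases h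
    exact ⟨hy, rfl⟩
  · rintro ⟨hx, rfl⟩
    exact ⟨x, hx, rfl⟩

variable (P)

lemma image_fst_graph {U : Finset X} (hU : U ∈ C.faces) (a : P.obj U hU) :
    (P.graph hU a).image Sigma.fst = U := by
  simp [graph, Finset.image_image, Function.comp_def]

lemma injOn_fst_graph {U : Finset X} (hU : U ∈ C.faces) (a : P.obj U hU) :
    Set.InjOn Sigma.fst (P.graph hU a : Set P.Etale) := by
  rintro ⟨x, p⟩ hp ⟨y, q⟩ hq (rfl : x = y)
  obtain ⟨hx, rfl⟩ := mem_graph.mp hp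
  obtain ⟨-, rfl⟩ := mem_graph.mp hq
  rfl

lemma graph_injective {U : Finset X} (hU : U ∈ C.faces) : Function.Injective (P.graph hU) := by
  intro a b hab
  refine P.ext_germ hU fun x hx => ?_
  have hmem : (⟨x, P.germ hU a x hx⟩ : P.Etale) ∈ P.graph hU b :=
    hab ▸ mem_graph.mpr ⟨hx, rfl⟩
  exact (mem_graph.mp hmem).2

lemma graph_res {U V : Finset X} (hU : U ∈ C.faces) (hV : V ∈ C.faces) (hVU : V ⊆ U)
    (a : P.obj U hU) :
    P.graph hV (P.res hU hV hVU a) = (P.graph hU a).filter (·.1 ∈ V) := by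
  ext ⟨x, p⟩
  simp only [Finset.mem_filter, mem_graph, germ_res]
  exact ⟨fun ⟨hx, hp⟩ => ⟨⟨hVU hx, hp⟩, hx⟩, fun ⟨⟨_, hp⟩, hx⟩ => ⟨hx, hp⟩⟩

lemma eq_graph_res_of_subset {U V : Finset X} (hU : U ∈ C.faces) (hV : V ∈ C.faces)
    (hVU : V ⊆ U) (a : P.obj U hU) {t : Finset P.Etale} (ht : t ⊆ P.graph hU a)
    (htV : t.image Sigma.fst = V) : t = P.graph hV (P.res hU hV hVU a) := by
  rw [graph_res]
  ext e
  rw [Finset.mem_filter, ← htV, Finset.mem_image]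
  refine ⟨fun he => ⟨ht he, e, he, rfl⟩, fun ⟨he, e', he', hfst⟩ => ?_⟩
  rwa [← P.injOn_fst_graph hU a (ht he') he hfst]

noncomputable def etaleBundle : Bnd C where
  E := P.Etale
  faces := {t | ∃ (U : Finset X) (hU : U ∈ C.faces) (a : P.obj U hU), t ⊆ P.graph hU a}
  down_closed := fun ⟨W, hW, a, h⟩ hts => ⟨W, hW, a, hts.trans h⟩
  vertex_mem := fun ⟨x, p⟩ => ⟨{x}, C.singleton_mem x, p,
    Finset.singleton_subset_iff.mpr
      (mem_graph.mpr ⟨Finset.mem_singleton_self x, (P.germ_self x p).symm⟩)⟩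
  π := Sigma.fst
  simplicial := fun _ ⟨_, hW, a, h⟩ =>
    C.down_closed hW (P.image_fst_graph hW a ▸ Finset.image_subset_image h)
  nondeg := fun _ ⟨_, hW, a, h⟩ => (P.injOn_fst_graph hW a).mono h

noncomputable def toEtaleSections : P ⟶ bundlePsh P.etaleBundle :=
  ⟨fun U hU a => ⟨P.graph hU a, ⟨U, hU, a, subset_rfl⟩, P.image_fst_graph hU a⟩,
    fun _ _ hU hV h a => Subtype.ext (P.graph_res hU hV h a)⟩

lemma toEtaleSections_bijective (U : Finset X) (hU : U ∈ C.faces) :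
    Function.Bijective (P.toEtaleSections.1 U hU) := by
  refine ⟨fun a b hab => P.graph_injective hU (congrArg Subtype.val hab), ?_⟩
  rintro ⟨t, ⟨W, hW, a, htW⟩, htU⟩
  have hUW : U ⊆ W := htU ▸ P.image_fst_graph hW a ▸ Finset.image_subset_image htW
  exact ⟨P.res hW hU hUW a, Subtype.ext (P.eq_graph_res_of_subset hW hU hUW a htW htU).symm⟩

instance : IsIso P.toEtaleSections :=
  P.isIso_of_bijective _ P.toEtaleSections_bijective

end SepPsh

namespace Bnd

variable {X : Type} {C : SC X}

lemma card_section (B : Bnd C) {U : Finset X} {hU : U ∈ C.faces}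
    (s : (bundlePsh B).obj U hU) : s.1.card = U.card := by
  obtain ⟨t, ht, rfl⟩ := s
  exact (Finset.card_image_of_injOn (B.nondeg t ht)).symm

def vertexSection (B : Bnd C) (e : B.E) : (bundlePsh B).obj {B.π e} (C.singleton_mem _) :=
  ⟨{e}, B.vertex_mem e, by simp⟩

lemma res_eq_vertexSection (B : Bnd C) {U : Finset X} {hU : U ∈ C.faces}
    (s : (bundlePsh B).obj U hU) {e : B.E} (he : e ∈ s.1) (h : {B.π e} ⊆ U) :
    (bundlePsh B).res hU (C.singleton_mem _) h s = B.vertexSection e := by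
  refine Subtype.ext (Finset.ext fun a => ?_)
  change a ∈ s.1.filter (fun a => B.π a ∈ ({B.π e} : Finset X)) ↔ a ∈ ({e} : Finset B.E)
  simp only [Finset.mem_filter, Finset.mem_singleton]
  exact ⟨fun ⟨ha, hπ⟩ => B.nondeg _ s.2.1 ha he hπ, by rintro rfl; exact ⟨he, rfl⟩⟩

variable {B₁ B₂ : Bnd C} (φ : bundlePsh B₁ ⟶ bundlePsh B₂)

lemma exists_map_vertexSection_eq (e : B₁.E) :
    ∃ e', (φ.1 _ _ (B₁.vertexSection e)).1 = {e'} :=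
  Finset.card_eq_one.mp ((card_section _ _).trans (Finset.card_singleton _))

noncomputable def vertexMap (e : B₁.E) : B₂.E :=
  (exists_map_vertexSection_eq φ e).choose

lemma map_vertexSection (e : B₁.E) :
    (φ.1 _ _ (B₁.vertexSection e)).1 = {vertexMap φ e} :=
  (exists_map_vertexSection_eq φ e).choose_spec

lemma π_vertexMap (e : B₁.E) : B₂.π (vertexMap φ e) = B₁.π e := by
  simpa [map_vertexSection] using (φ.1 _ _ (B₁.vertexSection e)).2.2

lemma vertexMap_mem {U : Finset X} {hU : U ∈ C.faces} (s : (bundlePsh B₁).obj U hU)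
    {e : B₁.E} (he : e ∈ s.1) : vertexMap φ e ∈ (φ.1 U hU s).1 := by
  have h : {B₁.π e} ⊆ U :=
    Finset.singleton_subset_iff.mpr (s.2.2 ▸ Finset.mem_image_of_mem _ he)
  have hnat := congrArg Subtype.val (φ.2 U _ hU (C.singleton_mem _) h s)
  rw [res_eq_vertexSection _ s he, map_vertexSection] at hnat
  exact Finset.filter_subset _ _ (hnat ▸ Finset.mem_singleton_self _)

/-- The image of `s` lies in `φ s`, and both have `|U|` elements. -/
lemma map_eq_image {U : Finset X} (hU : U ∈ C.faces) (s : (bundlePsh B₁).obj U hU) :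
    (φ.1 U hU s).1 = s.1.image (vertexMap φ) := by
  refine (Finset.eq_of_subset_of_card_le ?_ ?_).symm
  · exact Finset.image_subset_iff.mpr fun e he => vertexMap_mem φ s he
  · calc (φ.1 U hU s).1.card = U.card := card_section _ _
      _ = ((s.1.image (vertexMap φ)).image B₂.π).card := by
        rw [Finset.image_image, show B₂.π ∘ vertexMap φ = B₁.π from funext (π_vertexMap φ),
          s.2.2]
      _ ≤ (s.1.image (vertexMap φ)).card := Finset.card_image_le

end Bnd

instance bundleToPresheaf_faithful {X : Type} (C : SC X) : (bundleToPresheaf C).Faithful where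
  map_injective {B₁ _} f g hfg := Subtype.ext <| funext fun e => by
    have h := congrArg (fun φ => (φ.1 _ _ (B₁.vertexSection e)).1) hfg
    simpa [bundleToPresheaf, Bnd.vertexSection] using h

instance bundleToPresheaf_full {X : Type} (C : SC X) : (bundleToPresheaf C).Full where
  map_surjective {B₁ B₂} φ := by
    refine ⟨⟨Bnd.vertexMap φ, fun s hs => ?_, Bnd.π_vertexMap φ⟩, ?_⟩
    · rw [← Bnd.map_eq_image φ (B₁.simplicial s hs) ⟨s, hs, rfl⟩]
      exact (φ.1 _ _ _).2.1
    · exact Subtype.ext (funext₂ fun U hU => funext fun s =>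
        Subtype.ext (Bnd.map_eq_image φ hU s).symm)

instance bundleToPresheaf_essSurj {X : Type} (C : SC X) : (bundleToPresheaf C).EssSurj where
  mem_essImage P := ⟨P.etaleBundle, ⟨(asIso P.toEtaleSections).symm⟩⟩

/-- The category of separated `Set`-valued presheaves on a
simplicial complex `C` is equivalent to the category of non-degenerate
bundles over `C`, via the functor sending a bundle `π : A → C` to the
presheaf `U ↦ {s ∈ A : π[s] = U}` with restrictions `s ↦ s ∩ π⁻¹[V]`. -/
theorem stmt3 {X : Type} (C : SC X) : (bundleToPresheaf C).IsEquivalence := { }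
end
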